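/- arXiv:1008.0061 — 4 statements merged into one kernel-verified Lean document; each statement's English description precedes it below -/
import Mathlib

section
/- If L₀,…,L_{μ−1} are linearly independent differential operators spanning a closed subspace Δ of Span_ℂ(𝔇) and satisfying Lᵢ(fⱼ)(x̂ₑ) = 0 for all i, j, then Lᵢ(q·fⱼ)(x̂ₑ) = 0 for every polynomial q; hence Δ ⊆ Δ_{x̂ₑ}(I) for I = (f₁,…,fₙ). -/
open MvPolynomial

/-- `dEval p α f` is the value of the scaled differential operator
`D(α) = (1/α!) ∂^α` applied to `f` and evaluated at the point `p`
(equivalently, the `α`-th Taylor coefficient of `f` at `p`). -/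
noncomputable def dEval {σ : Type*} [Fintype σ] [DecidableEq σ]
    (p : σ → ℂ) (α : σ →₀ ℕ) (f : MvPolynomial σ ℂ) : ℂ :=
  MvPolynomial.coeff α
    (MvPolynomial.aeval (fun i => MvPolynomial.X i + MvPolynomial.C (p i)) f)

/-- The value at `p` on `f` of the differential operator with coefficient vector `c`,
`L = ∑ c_α D(α)`. -/
noncomputable def applyOp {σ : Type*} [Fintype σ] [DecidableEq σ]
    (c : (σ →₀ ℕ) →₀ ℂ) (p : σ → ℂ) (f : MvPolynomial σ ℂ) : ℂ :=
  Finsupp.linearCombination ℂ (fun α => dEval p α f) c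

/-- The Max Noether (local dual) space of an ideal `I` at the point `p`,
represented by the coefficient vectors of differential operators annihilating `I` at `p`. -/
noncomputable def dualSpace {σ : Type*} [Fintype σ] [DecidableEq σ]
    (p : σ → ℂ) (I : Ideal (MvPolynomial σ ℂ)) : Submodule ℂ ((σ →₀ ℕ) →₀ ℂ) :=
  ⨅ f ∈ I, LinearMap.ker (Finsupp.linearCombination ℂ (fun α => dEval p α f))

/-- The truncation of the dual space to operators of order at most `k`. -/
noncomputable def dualSpaceLe {σ : Type*} [Fintype σ] [DecidableEq σ]
    (p : σ → ℂ) (I : Ideal (MvPolynomial σ ℂ)) (k : ℕ) : Submodule ℂ ((σ →₀ ℕ) →₀ ℂ) :=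
  dualSpace p I ⊓ Finsupp.supported ℂ ℂ {α | (α.sum fun _ m => m) ≤ k}

/-- The anti-differentiation map `Φⱼ` on coefficient vectors of differential operators:
`(Φⱼ c)(β) = c(β + eⱼ)`. -/
noncomputable def shiftOp {σ : Type*} [DecidableEq σ] (j : σ)
    (c : (σ →₀ ℕ) →₀ ℂ) : (σ →₀ ℕ) →₀ ℂ :=
  Finsupp.comapDomain (fun β => β + Finsupp.single j 1) c
    ((add_left_injective _).injOn)

/-- Jacobian matrix of a polynomial system at a point. -/
noncomputable def jacMat {σ : Type*} [Fintype σ] [DecidableEq σ]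
    (F : σ → MvPolynomial σ ℂ) (p : σ → ℂ) : Matrix σ σ ℂ :=
  Matrix.of fun i j => MvPolynomial.eval p (MvPolynomial.pderiv j (F i))

/-!
Multiplication by `xⱼ` satisfies the Leibniz-type rule
`L(xⱼ h)(p) = (Φⱼ L)(h)(p) + pⱼ · L(h)(p)`. Hence, when `Δ` is closed under every `Φⱼ`, the
polynomials annihilated at `p` by all of `Δ` are stable under multiplication by each `xⱼ`, and so
form an ideal; if it contains the generators `fⱼ`, it contains `(f₁, …, fₙ)`.
-/

open MvPolynomial

variable {σ : Type*} [DecidableEq σ]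

lemma shiftOp_apply (j : σ) (c : (σ →₀ ℕ) →₀ ℂ) (β : σ →₀ ℕ) :
    shiftOp j c β = c (β + Finsupp.single j 1) := rfl

lemma shiftOp_zero (j : σ) : shiftOp j (0 : (σ →₀ ℕ) →₀ ℂ) = 0 := by
  ext; simp [shiftOp_apply]

lemma shiftOp_add (j : σ) (c₁ c₂ : (σ →₀ ℕ) →₀ ℂ) :
    shiftOp j (c₁ + c₂) = shiftOp j c₁ + shiftOp j c₂ := by
  ext; simp [shiftOp_apply]

lemma shiftOp_single_of_eq_zero {j : σ} {α : σ →₀ ℕ} (hα : α j = 0) (b : ℂ) :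
    shiftOp j (Finsupp.single α b) = 0 := by
  ext γ
  rw [shiftOp_apply, Finsupp.single_apply, if_neg, Finsupp.coe_zero, Pi.zero_apply]
  intro heq
  simpa [hα] using congrArg (· j) heq

lemma shiftOp_single_of_ne_zero {j : σ} {α : σ →₀ ℕ} (hα : α j ≠ 0) (b : ℂ) :
    shiftOp j (Finsupp.single α b) = Finsupp.single (α - Finsupp.single j 1) b := by
  have hle : Finsupp.single j 1 ≤ α := by
    simpa [Finsupp.single_le_iff] using Nat.one_le_iff_ne_zero.mpr hα
  ext γ
  rw [shiftOp_apply, Finsupp.single_apply, Finsupp.single_apply]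
  refine if_congr ⟨?_, ?_⟩ rfl rfl
  · rintro rfl
    exact add_tsub_cancel_right γ _
  · rintro rfl
    exact (tsub_add_cancel_of_le hle).symm

variable [Fintype σ] (p : σ → ℂ)

lemma dEval_X_mul (α : σ →₀ ℕ) (j : σ) (h : MvPolynomial σ ℂ) :
    dEval p α (X j * h) =
      (if j ∈ α.support then dEval p (α - Finsupp.single j 1) h else 0) + p j * dEval p α h := by
  simp only [dEval, map_mul, aeval_X]
  rw [add_mul, coeff_add, coeff_X_mul', coeff_C_mul]

lemma applyOp_add_right (c : (σ →₀ ℕ) →₀ ℂ) (g h : MvPolynomial σ ℂ) :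
    applyOp c p (g + h) = applyOp c p g + applyOp c p h := by
  simp [applyOp, dEval, Finsupp.linearCombination_apply, mul_add, Finsupp.sum_add]

lemma applyOp_C_mul (c : (σ →₀ ℕ) →₀ ℂ) (a : ℂ) (h : MvPolynomial σ ℂ) :
    applyOp c p (C a * h) = a * applyOp c p h := by
  simp only [applyOp, dEval, Finsupp.linearCombination_apply, map_mul, algHom_C,
    algebraMap_eq, coeff_C_mul, smul_eq_mul, Finsupp.mul_sum]
  exact Finsupp.sum_congr fun _ _ => by ring

lemma applyOp_zero_right (c : (σ →₀ ℕ) →₀ ℂ) : applyOp c p 0 = 0 := by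
  simp [applyOp, dEval, Finsupp.linearCombination_apply]

lemma applyOp_single (α : σ →₀ ℕ) (b : ℂ) (h : MvPolynomial σ ℂ) :
    applyOp (Finsupp.single α b) p h = b * dEval p α h := by
  simp [applyOp, Finsupp.linearCombination_single]

lemma applyOp_X_mul (j : σ) (c : (σ →₀ ℕ) →₀ ℂ) (h : MvPolynomial σ ℂ) :
    applyOp c p (X j * h) = applyOp (shiftOp j c) p h + p j * applyOp c p h := by
  induction c using Finsupp.induction_linear with
  | zero => simp [applyOp, shiftOp_zero]
  | add c₁ c₂ ih₁ ih₂ =>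
    simp only [applyOp, shiftOp_add, map_add] at ih₁ ih₂ ⊢
    rw [ih₁, ih₂]
    ring
  | single α b =>
    rcases eq_or_ne (α j) 0 with hα | hα
    · rw [shiftOp_single_of_eq_zero hα, applyOp_single, applyOp_single, dEval_X_mul,
        if_neg (by simpa using hα)]
      simp [applyOp]
      ring
    · rw [shiftOp_single_of_ne_zero hα, applyOp_single, applyOp_single, applyOp_single,
        dEval_X_mul, if_pos (by simpa using hα)]
      ring

lemma applyOp_mul_eq_zero_of_closed {Δ : Submodule ℂ ((σ →₀ ℕ) →₀ ℂ)}
    (hclosed : ∀ c ∈ Δ, ∀ j, shiftOp j c ∈ Δ) {g : MvPolynomial σ ℂ}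
    (hg : ∀ c ∈ Δ, applyOp c p g = 0) (q : MvPolynomial σ ℂ) :
    ∀ c ∈ Δ, applyOp c p (q * g) = 0 := by
  induction q using MvPolynomial.induction_on with
  | C a =>
    intro c hc
    rw [applyOp_C_mul, hg c hc, mul_zero]
  | add q₁ q₂ ih₁ ih₂ =>
    intro c hc
    rw [add_mul, applyOp_add_right, ih₁ c hc, ih₂ c hc, add_zero]
  | mul_X q j ih =>
    intro c hc
    rw [mul_right_comm, mul_comm _ (X j), applyOp_X_mul, ih _ (hclosed c hc j), ih c hc,
      mul_zero, add_zero]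

lemma le_dualSpace_iff {Δ : Submodule ℂ ((σ →₀ ℕ) →₀ ℂ)} {I : Ideal (MvPolynomial σ ℂ)} :
    Δ ≤ dualSpace p I ↔ ∀ g ∈ I, ∀ c ∈ Δ, applyOp c p g = 0 := by
  simp only [SetLike.le_def, dualSpace, Submodule.mem_iInf, LinearMap.mem_ker, applyOp]
  exact forall₂_comm

lemma le_dualSpace_span_of_closed {Δ : Submodule ℂ ((σ →₀ ℕ) →₀ ℂ)}
    (hclosed : ∀ c ∈ Δ, ∀ j, shiftOp j c ∈ Δ) {S : Set (MvPolynomial σ ℂ)}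
    (hS : ∀ g ∈ S, ∀ c ∈ Δ, applyOp c p g = 0) :
    Δ ≤ dualSpace p (Ideal.span S) := by
  rw [le_dualSpace_iff]
  intro g hg
  induction hg using Submodule.span_induction with
  | mem g hg => exact hS g hg
  | zero => exact fun c _ => applyOp_zero_right p c
  | add g h _ _ hg hh =>
    intro c hc
    rw [applyOp_add_right, hg c hc, hh c hc, add_zero]
  | smul q g _ hg => exact applyOp_mul_eq_zero_of_closed p hclosed hg q

theorem closed_subspace_le_dualSpace_general {n μ : ℕ}
    (f : Fin n → MvPolynomial (Fin n) ℂ) (xe : Fin n → ℂ)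
    (L : Fin μ → ((Fin n →₀ ℕ) →₀ ℂ))
    (Δ : Submodule ℂ ((Fin n →₀ ℕ) →₀ ℂ))
    (hΔ : Δ = Submodule.span ℂ (Set.range L))
    (hclosed : ∀ c ∈ Δ, ∀ j, shiftOp j c ∈ Δ)
    (hann : ∀ i j, applyOp (L i) xe (f j) = 0) :
    (∀ i j, ∀ q : MvPolynomial (Fin n) ℂ, applyOp (L i) xe (q * f j) = 0) ∧
      Δ ≤ dualSpace xe (Ideal.span (Set.range f)) := by
  have hgen : ∀ g ∈ Set.range f, ∀ c ∈ Δ, applyOp c xe g = 0 := by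
    rintro _ ⟨j, rfl⟩ c hc
    have hΔker : Δ ≤ LinearMap.ker (Finsupp.linearCombination ℂ fun α => dEval xe α (f j)) := by
      rw [hΔ, Submodule.span_le]
      rintro _ ⟨i, rfl⟩
      exact hann i j
    exact hΔker hc
  have hdual := le_dualSpace_span_of_closed xe hclosed hgen
  refine ⟨fun i j q => ?_, hdual⟩
  have hLi : L i ∈ Δ := hΔ ▸ Submodule.subset_span (Set.mem_range_self i)
  have hqf : q * f j ∈ Ideal.span (Set.range f) :=
    Ideal.mul_mem_left _ q (Ideal.subset_span ⟨j, rfl⟩)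
  exact (le_dualSpace_iff xe).mp hdual _ hqf _ hLi

/-- If `L₀, …, L_{μ−1}` are linearly independent differential operators spanning a closed
subspace `Δ` and satisfying `Lᵢ(fⱼ)(x̂ₑ) = 0` for all `i, j`, then `Lᵢ(q·fⱼ)(x̂ₑ) = 0` for
every polynomial `q`; hence `Δ ⊆ Δ_{x̂ₑ}(I)` for `I = (f₁,…,fₙ)`. -/
theorem closed_subspace_le_dualSpace {n μ : ℕ}
    (f : Fin n → MvPolynomial (Fin n) ℂ) (xe : Fin n → ℂ)
    (L : Fin μ → ((Fin n →₀ ℕ) →₀ ℂ))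
    (hindep : LinearIndependent ℂ L)
    (Δ : Submodule ℂ ((Fin n →₀ ℕ) →₀ ℂ))
    (hΔ : Δ = Submodule.span ℂ (Set.range L))
    (hclosed : ∀ c ∈ Δ, ∀ j, shiftOp j c ∈ Δ)
    (hann : ∀ i j, applyOp (L i) xe (f j) = 0) :
    (∀ i j, ∀ q : MvPolynomial (Fin n) ℂ, applyOp (L i) xe (q * f j) = 0) ∧
      Δ ≤ dualSpace xe (Ideal.span (Set.range f)) :=
  closed_subspace_le_dualSpace_general f xe L Δ hΔ hclosed hann
end

section
/- Linear algebra step of the breadth-one refinement: if ‖H'(ẑ)(ẑₑ−ẑ)‖ ≤ Cε², ‖∂H(ẑ)/∂z₁‖ ≤ C₁ε, ‖ẑₑ−ẑ‖ ≤ ε, and the submatrix [∂H(ẑ)/∂z₂,…,∂H(ẑ)/∂zₙ] has smallest singular value ≥ c > 0, then |ẑ_{i,e} − ẑᵢ| ≤ ((C + C₁)/c)·ε² for all 2 ≤ i ≤ n. -/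
/-!
Write `d = ze - z` and let `w` be `d` with its first coordinate set to zero. Then
`A w = A d - d₀ • (first column of A)`, so `‖A w‖ ≤ C ε² + ε · C₁ ε`, and the lower bound of `A`
on the hyperplane `{w₀ = 0}` turns this into `c ‖w‖ ≤ (C + C₁) ε²`. Every coordinate of `w` other
than the first is a coordinate of `d`, and is bounded by `‖w‖`.
-/

open Matrix

theorem sqrt_sum_norm_sq_eq_norm_toLp {ι : Type*} [Fintype ι] {β : ι → Type*}
    [∀ i, SeminormedAddCommGroup (β i)] (v : ∀ i, β i) :
    √(∑ i, ‖v i‖ ^ 2) = ‖WithLp.toLp 2 v‖ :=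
  (PiLp.norm_eq_of_L2 _).symm

section

variable {𝕜 : Type*} [NormedField 𝕜] {m n : Type*} [Fintype m] [Fintype n] [DecidableEq n]

theorem norm_mulVec_sub_single_le (A : Matrix m n 𝕜) (d : n → 𝕜) (j : n) :
    ‖WithLp.toLp 2 (A *ᵥ (d - Pi.single j (d j)))‖ ≤
      ‖WithLp.toLp 2 (A *ᵥ d)‖ + ‖d j‖ * ‖WithLp.toLp 2 (A.col j)‖ := by
  rw [mulVec_sub, mulVec_single, op_smul_eq_smul, WithLp.toLp_sub, WithLp.toLp_smul,
    ← norm_smul]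
  exact norm_sub_le _ _

theorem mul_norm_sub_single_le (A : Matrix m n 𝕜) (d : n → 𝕜) (j : n) {c : ℝ}
    (hA : ∀ w : n → 𝕜, w j = 0 → c * ‖WithLp.toLp 2 w‖ ≤ ‖WithLp.toLp 2 (A *ᵥ w)‖) :
    c * ‖WithLp.toLp 2 (d - Pi.single j (d j))‖ ≤
      ‖WithLp.toLp 2 (A *ᵥ d)‖ + ‖d j‖ * ‖WithLp.toLp 2 (A.col j)‖ :=
  (hA _ (by simp)).trans (norm_mulVec_sub_single_le A d j)

end

theorem breadth_one_componentwise_quadratic_bound_general {n : ℕ}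
    (A : Matrix (Fin (n + 1)) (Fin (n + 1)) ℂ)  -- the Jacobian H'(ẑ)
    (z ze : Fin (n + 1) → ℂ) (ε C C₁ c : ℝ)
    (hc : 0 < c)
    (hAd : Real.sqrt (∑ i, ‖(A *ᵥ (ze - z)) i‖ ^ 2) ≤ C * ε ^ 2)
    (hcol1 : Real.sqrt (∑ i, ‖A i 0‖ ^ 2) ≤ C₁ * ε)
    (hd : Real.sqrt (∑ i, ‖(ze - z) i‖ ^ 2) ≤ ε)
    (hsub : ∀ w : Fin (n + 1) → ℂ, w 0 = 0 →
        c * Real.sqrt (∑ i, ‖w i‖ ^ 2) ≤ Real.sqrt (∑ i, ‖(A *ᵥ w) i‖ ^ 2)) :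
    ∀ i, i ≠ 0 → ‖ze i - z i‖ ≤ ((C + C₁) / c) * ε ^ 2 := by
  intro i hi
  set d := ze - z
  simp only [sqrt_sum_norm_sq_eq_norm_toLp] at hAd hcol1 hd hsub
  have hcol : ‖WithLp.toLp 2 (A.col 0)‖ ≤ C₁ * ε := hcol1
  have hε : 0 ≤ ε := (norm_nonneg _).trans hd
  have hd0 : ‖d 0‖ ≤ ε := (PiLp.norm_apply_le (WithLp.toLp 2 d) 0).trans hd
  have hoff : c * ‖WithLp.toLp 2 (d - Pi.single 0 (d 0))‖ ≤ (C + C₁) * ε ^ 2 :=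
    calc _ ≤ ‖WithLp.toLp 2 (A *ᵥ d)‖ + ‖d 0‖ * ‖WithLp.toLp 2 (A.col 0)‖ :=
          mul_norm_sub_single_le A d 0 hsub
      _ ≤ C * ε ^ 2 + ε * (C₁ * ε) := by gcongr
      _ = (C + C₁) * ε ^ 2 := by ring
  calc ‖ze i - z i‖ = ‖(d - Pi.single 0 (d 0) : Fin (n + 1) → ℂ) i‖ := by simp [d, hi]
    _ ≤ ‖WithLp.toLp 2 (d - Pi.single 0 (d 0))‖ := PiLp.norm_apply_le (WithLp.toLp 2 _) i
    _ ≤ ((C + C₁) / c) * ε ^ 2 := by rwa [div_mul_eq_mul_div, le_div_iff₀' hc]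

/-- Linear algebra step of the breadth-one refinement: if `‖H'(ẑ)(ẑₑ−ẑ)‖ ≤ Cε²`,
`‖∂H(ẑ)/∂z₁‖ ≤ C₁ε`, `‖ẑₑ−ẑ‖ ≤ ε`, and the submatrix `[∂H(ẑ)/∂z₂,…,∂H(ẑ)/∂zₙ]` has smallest
singular value `≥ c > 0`, then `|ẑ_{i,e} − ẑᵢ| ≤ ((C + C₁)/c) ε²` for all `2 ≤ i ≤ n`. -/
theorem breadth_one_componentwise_quadratic_bound {n : ℕ}
    (A : Matrix (Fin (n + 1)) (Fin (n + 1)) ℂ)  -- the Jacobian H'(ẑ)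
    (z ze : Fin (n + 1) → ℂ) (ε C C₁ c : ℝ)
    (hε : 0 < ε) (hC : 0 < C) (hC₁ : 0 < C₁) (hc : 0 < c)
    (hAd : Real.sqrt (∑ i, ‖(A *ᵥ (ze - z)) i‖ ^ 2) ≤ C * ε ^ 2)
    (hcol1 : Real.sqrt (∑ i, ‖A i 0‖ ^ 2) ≤ C₁ * ε)
    (hd : Real.sqrt (∑ i, ‖(ze - z) i‖ ^ 2) ≤ ε)
    (hsub : ∀ w : Fin (n + 1) → ℂ, w 0 = 0 →
        c * Real.sqrt (∑ i, ‖w i‖ ^ 2) ≤ Real.sqrt (∑ i, ‖(A *ᵥ w) i‖ ^ 2)) :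
    ∀ i, i ≠ 0 → ‖ze i - z i‖ ≤ ((C + C₁) / c) * ε ^ 2 :=
  breadth_one_componentwise_quadratic_bound_general A z ze ε C C₁ c hc hAd hcol1 hd hsub
end

section
/- If μ ≥ 3 (so a second-order Noether condition L₂ = (1/2)∂²/∂z₁² + a_{2,2}∂/∂z₂ + ⋯ + a_{2,n}∂/∂zₙ annihilates H at ẑₑ), then the vector v = [1, 0,…,0, 2a_{2,2},…,2a_{2,n}]ᵀ ∈ ℂ^{2n} is a null vector of the Jacobian of the augmented system G(z,λ) = (H(z), H'(z)λ, λ₁−1) evaluated at (ẑₑ, λ̂ₑ) where λ̂ₑ = e₁. -/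
/-!
A Jacobian-vector product `G'(q) v` is the evaluation at `q` of the directional derivative
`D_v = Σ_c v_c ∂_c`, a derivation. Writing `v = (u, w)`, the Leibniz rule gives the three blocks
of `G'(z, λ) v` as `D_u H(z)`, `(D_u H')(z) λ + H'(z) w` and `w₁`. For `u = λ = e₁` these are
`∂₁H(ẑₑ) = 0`, `∂₁²H(ẑₑ) + H'(ẑₑ) w = 2 L₂(H)(ẑₑ) = 0` (the `j = 1` term of `L₂` vanishes because
`∂₁H(ẑₑ) = 0`) and `w₁ = 0`.
-/

open MvPolynomial Matrix

/-- The augmented (deflated) system `G(z,λ) = (H(z), H'(z)·λ, λ₁ − 1)` as a system of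
`2n+1` polynomials in the `2n` variables `(z, λ)`. -/
noncomputable def augSys {n : ℕ} (H : Fin (n + 1) → MvPolynomial (Fin (n + 1)) ℂ) :
    (Fin (n + 1) ⊕ (Fin (n + 1) ⊕ Unit)) → MvPolynomial (Fin (n + 1) ⊕ Fin (n + 1)) ℂ :=
  Sum.elim (fun i => MvPolynomial.rename Sum.inl (H i))
    (Sum.elim
      (fun i => ∑ j, MvPolynomial.rename Sum.inl (MvPolynomial.pderiv j (H i)) *
          MvPolynomial.X (Sum.inr j))
      (fun _ => MvPolynomial.X (Sum.inr 0) - 1))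

/-- The Jacobian of the augmented system at a point `(z, λ)`. -/
noncomputable def augJac {n : ℕ} (H : Fin (n + 1) → MvPolynomial (Fin (n + 1)) ℂ)
    (q : Fin (n + 1) ⊕ Fin (n + 1) → ℂ) :
    Matrix (Fin (n + 1) ⊕ (Fin (n + 1) ⊕ Unit)) (Fin (n + 1) ⊕ Fin (n + 1)) ℂ :=
  Matrix.of fun r col => MvPolynomial.eval q (MvPolynomial.pderiv col (augSys H r))

namespace MvPolynomial

variable {σ τ R : Type*} [CommSemiring R]

theorem pderiv_inr_rename_inl (p : MvPolynomial σ R) (k : τ) :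
    pderiv (Sum.inr k) (rename (Sum.inl : σ → σ ⊕ τ) p) = 0 := by
  induction p using MvPolynomial.induction_on with
  | C a => simp
  | add p q hp hq => simp [hp, hq]
  | mul_X p j h => simp [h]

theorem eval_sumElim_rename_inl (x : σ → R) (y : τ → R) (p : MvPolynomial σ R) :
    eval (Sum.elim x y) (rename Sum.inl p) = eval x p := by
  rw [eval_rename]
  rfl

noncomputable def dirDeriv [Fintype σ] (v : σ → R) :
    Derivation R (MvPolynomial σ R) (MvPolynomial σ R) :=
  ∑ c, v c • pderiv c

variable [Fintype σ]

theorem dirDeriv_apply (v : σ → R) (p : MvPolynomial σ R) :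
    dirDeriv v p = ∑ c, v c • pderiv c p := by
  rw [dirDeriv, ← Derivation.coeFnAddMonoidHom_apply, map_sum, Finset.sum_apply]
  rfl

theorem dirDeriv_X (v : σ → R) (k : σ) : dirDeriv v (X k : MvPolynomial σ R) = C (v k) := by
  classical
  simp [dirDeriv_apply, pderiv_X, Pi.single_apply, smul_eq_C_mul]

theorem dirDeriv_single [DecidableEq σ] (i : σ) : dirDeriv (Pi.single i (1 : R)) = pderiv i := by
  ext p
  simp [dirDeriv_apply, Pi.single_apply]

theorem dirDeriv_sumElim_rename_inl [Fintype τ] (u : σ → R) (w : τ → R) (p : MvPolynomial σ R) :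
    dirDeriv (Sum.elim u w) (rename Sum.inl p) = rename Sum.inl (dirDeriv u p) := by
  simp [dirDeriv_apply, Fintype.sum_sum_type, pderiv_rename Sum.inl_injective,
    pderiv_inr_rename_inl, map_sum]

end MvPolynomial

section augJac

variable {n : ℕ} (H : Fin (n + 1) → MvPolynomial (Fin (n + 1)) ℂ)

theorem augJac_mulVec_apply (q v : Fin (n + 1) ⊕ Fin (n + 1) → ℂ)
    (r : Fin (n + 1) ⊕ (Fin (n + 1) ⊕ Unit)) :
    (augJac H q *ᵥ v) r = eval q (dirDeriv v (augSys H r)) := by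
  simp [mulVec, dotProduct, augJac, dirDeriv_apply, map_sum, smul_eval, mul_comm]

variable (z l u w : Fin (n + 1) → ℂ)

theorem augJac_mulVec_inl (i : Fin (n + 1)) :
    (augJac H (Sum.elim z l) *ᵥ Sum.elim u w) (Sum.inl i) = eval z (dirDeriv u (H i)) := by
  rw [augJac_mulVec_apply, augSys, Sum.elim_inl, dirDeriv_sumElim_rename_inl,
    eval_sumElim_rename_inl]

theorem augJac_mulVec_inr_inl (i : Fin (n + 1)) :
    (augJac H (Sum.elim z l) *ᵥ Sum.elim u w) (Sum.inr (Sum.inl i)) =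
      ∑ j, (eval z (dirDeriv u (pderiv j (H i))) * l j + eval z (pderiv j (H i)) * w j) := by
  simp [augJac_mulVec_apply, augSys, Derivation.leibniz, dirDeriv_X, dirDeriv_sumElim_rename_inl,
    eval_sumElim_rename_inl, map_sum, mul_comm]

theorem augJac_mulVec_inr_inr (t : Unit) :
    (augJac H (Sum.elim z l) *ᵥ Sum.elim u w) (Sum.inr (Sum.inr t)) = w 0 := by
  simp [augJac_mulVec_apply, augSys, dirDeriv_X]

end augJac

theorem augmented_jacobian_null_vector_general {n : ℕ}
    (H : Fin (n + 1) → MvPolynomial (Fin (n + 1)) ℂ)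
    (ze : Fin (n + 1) → ℂ) (a : Fin (n + 1) → ℂ)
    (hfirst : ∀ i, MvPolynomial.eval ze (MvPolynomial.pderiv 0 (H i)) = 0)
    (hL2 : ∀ i, (1 / 2 : ℂ) *
          MvPolynomial.eval ze (MvPolynomial.pderiv 0 (MvPolynomial.pderiv 0 (H i))) +
        ∑ j, a j * MvPolynomial.eval ze (MvPolynomial.pderiv j (H i)) = 0) :
    (augJac H (Sum.elim ze fun j => if j = 0 then 1 else 0)) *ᵥ
        (Sum.elim (fun i => if i = 0 then (1 : ℂ) else 0)
          (fun j => if j = 0 then 0 else 2 * a j)) = 0 := by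
  have he : (fun j : Fin (n + 1) => if j = 0 then (1 : ℂ) else 0) = Pi.single 0 1 := by
    funext j
    rw [Pi.single_apply]
  funext r
  rcases r with i | i | t
  · rw [augJac_mulVec_inl, he, dirDeriv_single]
    exact hfirst i
  · rw [augJac_mulVec_inr_inl, he, dirDeriv_single]
    have hw : ∀ j, eval ze (pderiv j (H i)) * (if j = 0 then 0 else 2 * a j) =
        2 * (a j * eval ze (pderiv j (H i))) := by
      intro j
      split_ifs with hj
      · rw [hj, hfirst i, mul_zero, mul_zero, mul_zero]
      · ring
    simp only [Finset.sum_add_distrib, hw, ← Finset.mul_sum, mul_ite, mul_one,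
      mul_zero, Finset.sum_ite_eq', Finset.mem_univ, if_true, Pi.zero_apply]
    linear_combination 2 * hL2 i
  · rw [augJac_mulVec_inr_inr]
    exact if_pos rfl

/-- If `μ ≥ 3`, so that a second-order Noether condition
`L₂ = (1/2)∂²/∂z₁² + Σ_{j≥2} a_{2,j} ∂/∂zⱼ` annihilates `H` at `ẑₑ`, then
`v = [1,0,…,0, 2a_{2,2},…,2a_{2,n}]ᵀ` is a null vector of the Jacobian of the augmented
system `G(z,λ) = (H(z), H'(z)λ, λ₁−1)` at `(ẑₑ, e₁)`. -/
theorem augmented_jacobian_null_vector {n : ℕ}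
    (H : Fin (n + 1) → MvPolynomial (Fin (n + 1)) ℂ)
    (ze : Fin (n + 1) → ℂ) (a : Fin (n + 1) → ℂ) (ha0 : a 0 = 0)
    (hzero : ∀ i, MvPolynomial.eval ze (H i) = 0)
    (hfirst : ∀ i, MvPolynomial.eval ze (MvPolynomial.pderiv 0 (H i)) = 0)
    (hL2 : ∀ i, (1 / 2 : ℂ) *
          MvPolynomial.eval ze (MvPolynomial.pderiv 0 (MvPolynomial.pderiv 0 (H i))) +
        ∑ j, a j * MvPolynomial.eval ze (MvPolynomial.pderiv j (H i)) = 0) :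
    (augJac H (Sum.elim ze fun j => if j = 0 then 1 else 0)) *ᵥ
        (Sum.elim (fun i => if i = 0 then (1 : ℂ) else 0)
          (fun j => if j = 0 then 0 else 2 * a j)) = 0 :=
  augmented_jacobian_null_vector_general H ze a hfirst hL2
end

section
/- For the breadth-one deflation with μ ≥ 3, the first-order differential operator L̃₁ = ∂/∂z₁ + 2a_{2,2}∂/∂λ₂ + ⋯ + 2a_{2,n}∂/∂λₙ annihilates the augmented system G(z,λ) = (H(z), H'(z)λ, λ₁−1) at (ẑₑ, e₁); equivalently, applying L̃₁ to the middle block H'(z)λ and evaluating gives 2·L₂(H)(ẑₑ) = 0. -/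
/-!
At `(ẑ, e₁)` the block `H(z)` only sees `∂/∂z₁`, which gives `∂H/∂z₁(ẑ) = 0` since `e₁` spans the
kernel of the Jacobian, and the block `λ₁ - 1` only sees `2a₁ ∂/∂λ₁`, which vanishes as `a₁ = 0`.
On the middle block `H'(z)λ`, the derivative `∂/∂z₁` at `λ = e₁` is `∂²H/∂z₁²(ẑ)` and `∂/∂λⱼ` is
`∂H/∂zⱼ(ẑ)`, so `L̃₁` gives exactly `2·L₂(H)(ẑ)`, which is `0` by the second-order condition.
-/

open MvPolynomial Matrix

lemma MvPolynomial.pderiv_rename_eq_zero_of_notMem_range {R σ τ : Type*} [CommSemiring R]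
    {f : σ → τ} {t : τ} (ht : t ∉ Set.range f) (p : MvPolynomial σ R) :
    pderiv t (rename f p) = 0 := by
  classical
  refine pderiv_eq_zero_of_notMem_vars fun hmem => ht ?_
  obtain ⟨s, -, rfl⟩ := Finset.mem_image.mp (vars_rename f p hmem)
  exact ⟨s, rfl⟩

lemma MvPolynomial.pderiv_inr_rename_inl_s12 {R σ τ : Type*} [CommSemiring R] (t : τ)
    (p : MvPolynomial σ R) :
    pderiv (Sum.inr t) (rename Sum.inl p) = 0 :=
  pderiv_rename_eq_zero_of_notMem_range (by simp) p

/-- The operator `L̃₁ = ∂/∂z₁ + 2 ∑ⱼ aⱼ ∂/∂λⱼ`, applied to `p` and evaluated at `q = (z, λ)`. -/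
noncomputable def liftedNoetherFunctional {n : ℕ} (a : Fin (n + 1) → ℂ)
    (q : Fin (n + 1) ⊕ Fin (n + 1) → ℂ) (p : MvPolynomial (Fin (n + 1) ⊕ Fin (n + 1)) ℂ) : ℂ :=
  eval q (pderiv (Sum.inl 0) p) + ∑ j, 2 * a j * eval q (pderiv (Sum.inr j) p)

namespace augSys

variable {n : ℕ} (H : Fin (n + 1) → MvPolynomial (Fin (n + 1)) ℂ)

lemma pderiv_inl_inl (i k : Fin (n + 1)) :
    pderiv (Sum.inl k) (augSys H (Sum.inl i)) = rename Sum.inl (pderiv k (H i)) :=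
  pderiv_rename Sum.inl_injective k (H i)

lemma pderiv_inr_inl (i j : Fin (n + 1)) :
    pderiv (Sum.inr j) (augSys H (Sum.inl i)) = 0 :=
  pderiv_inr_rename_inl_s12 j (H i)

lemma pderiv_inl_middle (i k : Fin (n + 1)) :
    pderiv (Sum.inl k) (augSys H (Sum.inr (Sum.inl i))) =
      ∑ j, rename Sum.inl (pderiv k (pderiv j (H i))) * X (Sum.inr j) := by
  simp [augSys, Derivation.leibniz, pderiv_rename Sum.inl_injective, pderiv_X, mul_comm]

lemma pderiv_inr_middle (i j : Fin (n + 1)) :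
    pderiv (Sum.inr j) (augSys H (Sum.inr (Sum.inl i))) = rename Sum.inl (pderiv j (H i)) := by
  simp [augSys, Derivation.leibniz, pderiv_inr_rename_inl_s12, pderiv_X, Pi.single_apply]

lemma pderiv_inl_last (k : Fin (n + 1)) (u : Unit) :
    pderiv (Sum.inl k) (augSys H (Sum.inr (Sum.inr u))) = 0 := by
  simp [augSys, pderiv_X]

lemma pderiv_inr_last (j : Fin (n + 1)) (u : Unit) :
    pderiv (Sum.inr j) (augSys H (Sum.inr (Sum.inr u))) = if j = 0 then 1 else 0 := by
  simp [augSys, pderiv_X, Pi.single_apply, eq_comm]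

variable (z lam a : Fin (n + 1) → ℂ)

lemma liftedNoetherFunctional_inl (i : Fin (n + 1)) :
    liftedNoetherFunctional a (Sum.elim z lam) (augSys H (Sum.inl i)) = eval z (pderiv 0 (H i)) := by
  simp [liftedNoetherFunctional, pderiv_inl_inl, pderiv_inr_inl, eval_rename]

lemma liftedNoetherFunctional_middle (i : Fin (n + 1)) :
    liftedNoetherFunctional a (Sum.elim z fun l => if l = 0 then 1 else 0)
        (augSys H (Sum.inr (Sum.inl i))) =
      2 * ((1 / 2 : ℂ) * eval z (pderiv 0 (pderiv 0 (H i))) +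
        ∑ j, a j * eval z (pderiv j (H i))) := by
  simp only [liftedNoetherFunctional, pderiv_inl_middle, pderiv_inr_middle, map_sum, map_mul,
    eval_rename, Sum.elim_comp_inl, eval_X, Sum.elim_inr, mul_ite, mul_one, mul_zero,
    Finset.sum_ite_eq', Finset.mem_univ, ↓reduceIte, mul_assoc, one_div]
  rw [mul_add, Finset.mul_sum]
  ring

lemma liftedNoetherFunctional_last (u : Unit) :
    liftedNoetherFunctional a (Sum.elim z lam) (augSys H (Sum.inr (Sum.inr u))) = 2 * a 0 := by
  simp [liftedNoetherFunctional, pderiv_inl_last, pderiv_inr_last]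

end augSys

theorem augmented_first_order_noether_condition_general {n : ℕ}
    (H : Fin (n + 1) → MvPolynomial (Fin (n + 1)) ℂ)
    (ze : Fin (n + 1) → ℂ) (a : Fin (n + 1) → ℂ) (ha0 : a 0 = 0)
    (hfirst : ∀ i, MvPolynomial.eval ze (MvPolynomial.pderiv 0 (H i)) = 0)
    (hL2 : ∀ i, (1 / 2 : ℂ) *
          MvPolynomial.eval ze (MvPolynomial.pderiv 0 (MvPolynomial.pderiv 0 (H i))) +
        ∑ j, a j * MvPolynomial.eval ze (MvPolynomial.pderiv j (H i)) = 0) :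
    (∀ r, MvPolynomial.eval (Sum.elim ze fun l => if l = 0 then 1 else 0)
          (MvPolynomial.pderiv (Sum.inl 0) (augSys H r)) +
        ∑ j, 2 * a j * MvPolynomial.eval (Sum.elim ze fun l => if l = 0 then 1 else 0)
          (MvPolynomial.pderiv (Sum.inr j) (augSys H r)) = 0) ∧
    (∀ i, MvPolynomial.eval (Sum.elim ze fun l => if l = 0 then 1 else 0)
          (MvPolynomial.pderiv (Sum.inl 0) (augSys H (Sum.inr (Sum.inl i)))) +
        ∑ j, 2 * a j * MvPolynomial.eval (Sum.elim ze fun l => if l = 0 then 1 else 0)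
          (MvPolynomial.pderiv (Sum.inr j) (augSys H (Sum.inr (Sum.inl i)))) =
        2 * ((1 / 2 : ℂ) *
            MvPolynomial.eval ze (MvPolynomial.pderiv 0 (MvPolynomial.pderiv 0 (H i))) +
          ∑ j, a j * MvPolynomial.eval ze (MvPolynomial.pderiv j (H i)))) := by
  have hmiddle := augSys.liftedNoetherFunctional_middle H ze a
  refine ⟨?_, hmiddle⟩
  rintro (i | i | u)
  · exact (augSys.liftedNoetherFunctional_inl H ze _ a i).trans (hfirst i)
  · exact (hmiddle i).trans (by rw [hL2 i, mul_zero])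
  · exact (augSys.liftedNoetherFunctional_last H ze _ a u).trans (by rw [ha0, mul_zero])

/-- For the breadth-one deflation with `μ ≥ 3`, the first-order differential operator
`L̃₁ = ∂/∂z₁ + 2a_{2,2}∂/∂λ₂ + ⋯ + 2a_{2,n}∂/∂λₙ` annihilates the augmented system
`G(z,λ) = (H(z), H'(z)λ, λ₁−1)` at `(ẑₑ, e₁)`; in particular on the middle block `H'(z)λ`
it evaluates to `2·L₂(H)(ẑₑ) = 0`. -/
theorem augmented_first_order_noether_condition {n : ℕ}
    (H : Fin (n + 1) → MvPolynomial (Fin (n + 1)) ℂ)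
    (ze : Fin (n + 1) → ℂ) (a : Fin (n + 1) → ℂ) (ha0 : a 0 = 0)
    (hzero : ∀ i, MvPolynomial.eval ze (H i) = 0)
    (hfirst : ∀ i, MvPolynomial.eval ze (MvPolynomial.pderiv 0 (H i)) = 0)
    (hL2 : ∀ i, (1 / 2 : ℂ) *
          MvPolynomial.eval ze (MvPolynomial.pderiv 0 (MvPolynomial.pderiv 0 (H i))) +
        ∑ j, a j * MvPolynomial.eval ze (MvPolynomial.pderiv j (H i)) = 0) :
    (∀ r, MvPolynomial.eval (Sum.elim ze fun l => if l = 0 then 1 else 0)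
          (MvPolynomial.pderiv (Sum.inl 0) (augSys H r)) +
        ∑ j, 2 * a j * MvPolynomial.eval (Sum.elim ze fun l => if l = 0 then 1 else 0)
          (MvPolynomial.pderiv (Sum.inr j) (augSys H r)) = 0) ∧
    (∀ i, MvPolynomial.eval (Sum.elim ze fun l => if l = 0 then 1 else 0)
          (MvPolynomial.pderiv (Sum.inl 0) (augSys H (Sum.inr (Sum.inl i)))) +
        ∑ j, 2 * a j * MvPolynomial.eval (Sum.elim ze fun l => if l = 0 then 1 else 0)
          (MvPolynomial.pderiv (Sum.inr j) (augSys H (Sum.inr (Sum.inl i)))) =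
        2 * ((1 / 2 : ℂ) *
            MvPolynomial.eval ze (MvPolynomial.pderiv 0 (MvPolynomial.pderiv 0 (H i))) +
          ∑ j, a j * MvPolynomial.eval ze (MvPolynomial.pderiv j (H i)))) :=
  augmented_first_order_noether_condition_general H ze a ha0 hfirst hL2
end
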